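/- arXiv:2212.13235 — 4 statements merged into one kernel-verified Lean document; each statement's English description precedes it below -/
import Mathlib

section
/- Let R : [0,1] → [0,1] be continuous with a unique fixed point z* in (0,1), no other fixed points in (0,1), and suppose 0 and 1 are not stable fixed points (i.e. for all sufficiently small ε > 0, R(R(ε)) > ε if R(0)=0, and R(R(1-ε)) < 1-ε if R(1)=1). Then the following are equivalent: (i) every fixed point of R∘R in [0,1] is a fixed point of R; (ii) there do not exist 0 ≤ z' < z* < z'' ≤ 1 with R(z') ≥ z'' and R(z'') ≤ z'. -/
/-- Lemma `rcond`: equivalence of the condition on fixed points of `R ∘ R` with the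
two-point condition, for a continuous self-map of `[0,1]` with unique interior fixed
point and no stable fixed points at the endpoints. -/
theorem stmt_0 (R : ℝ → ℝ)
    (hcont : ContinuousOn R (Set.Icc 0 1))
    (hmap : Set.MapsTo R (Set.Icc 0 1) (Set.Icc 0 1))
    (zs : ℝ) (hzs : zs ∈ Set.Ioo (0:ℝ) 1) (hfix : R zs = zs)
    (huniq : ∀ z ∈ Set.Ioo (0:ℝ) 1, R z = z → z = zs)
    (h0 : ∃ ε₀ > (0:ℝ), ∀ ε, 0 < ε → ε < ε₀ → R 0 = 0 → ε < R (R ε))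
    (h1 : ∃ ε₀ > (0:ℝ), ∀ ε, 0 < ε → ε < ε₀ → R 1 = 1 → R (R (1 - ε)) < 1 - ε) :
    ((∀ z ∈ Set.Icc (0:ℝ) 1, R (R z) = z → R z = z) ↔
      ¬ ∃ z' z'' : ℝ, 0 ≤ z' ∧ z' < zs ∧ zs < z'' ∧ z'' ≤ 1 ∧ z'' ≤ R z' ∧ R z'' ≤ z') := by
  obtain ⟨hzs0, hzs1⟩ := hzs
  constructor
  · -- (i) ⇒ (ii)
    rintro hi ⟨z', z'', hz'0, hz'lt, hltz'', hz''1, hRz', hRz''⟩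
    have hzsmem : zs ∈ Set.Icc (0:ℝ) 1 := ⟨le_of_lt hzs0, le_of_lt hzs1⟩
    have hsub : Set.Icc z' zs ⊆ Set.Icc (0:ℝ) 1 := by
      intro x hx
      exact ⟨le_trans hz'0 hx.1, le_trans hx.2 (le_of_lt hzs1)⟩
    -- find c ∈ [z', zs] with R c = z''
    have hIVT : Set.Icc (R zs) (R z') ⊆ R '' Set.Icc z' zs :=
      intermediate_value_Icc' (le_of_lt hz'lt) (hcont.mono hsub)
    have hz''mem : z'' ∈ Set.Icc (R zs) (R z') := by
      constructor
      · rw [hfix]; exact le_of_lt hltz''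
      · exact hRz'
    obtain ⟨c, hcmem, hRc⟩ := hIVT hz''mem
    have hc01 : c ∈ Set.Icc (0:ℝ) 1 := hsub hcmem
    have hclt : c < zs := by
      rcases lt_or_eq_of_le hcmem.2 with h | h
      · exact h
      · exfalso
        rw [h, hfix] at hRc
        exact absurd hRc (ne_of_lt hltz'')
    have hFc : R (R c) ≤ z' := by rw [hRc]; exact hRz''
    -- case split on R (R c) = c or R (R c) < c
    have hFcc : R (R c) ≤ c := le_trans hFc hcmem.1
    rcases lt_or_eq_of_le hFcc with h | h
    · -- R (R c) < c
      have hc0 : 0 < c := by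
        have : (0:ℝ) ≤ R (R c) := (hmap (hmap hc01)).1
        linarith
      -- F = R ∘ R is continuous on [0,1]
      have hFcont : ContinuousOn (fun x => R (R x)) (Set.Icc (0:ℝ) 1) :=
        hcont.comp hcont hmap
      -- no fixed point of F in (0, c]
      have hnofix : ∀ x, 0 < x → x ≤ c → R (R x) ≠ x := by
        intro x hx0 hxc hFx
        have hx01 : x ∈ Set.Icc (0:ℝ) 1 := ⟨le_of_lt hx0, le_trans hxc (le_trans (le_of_lt hclt) (le_of_lt hzs1))⟩
        have hRx : R x = x := hi x hx01 hFx
        have hx1 : x < 1 := lt_of_le_of_lt hxc (lt_trans hclt hzs1)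
        have := huniq x ⟨hx0, hx1⟩ hRx
        rw [this] at hxc
        exact absurd (lt_of_le_of_lt hxc hclt) (lt_irrefl zs)
      -- R 0 = 0
      have hsub0c : Set.Icc (0:ℝ) c ⊆ Set.Icc (0:ℝ) 1 := by
        intro x hx
        exact ⟨hx.1, le_trans hx.2 hc01.2⟩
      have hR00 : R 0 = 0 := by
        have hg : ContinuousOn (fun x => R (R x) - x) (Set.Icc (0:ℝ) c) :=
          (hFcont.mono hsub0c).sub continuousOn_id
        have hIVT2 : Set.Icc (R (R c) - c) (R (R 0) - 0) ⊆
            (fun x => R (R x) - x) '' Set.Icc (0:ℝ) c :=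
          intermediate_value_Icc' (le_of_lt hc0) hg
        have h00 : (0:ℝ) ∈ Set.Icc (R (R c) - c) (R (R 0) - 0) := by
          constructor
          · linarith
          · have : (0:ℝ) ≤ R (R 0) := (hmap (hmap ⟨le_refl 0, zero_le_one⟩)).1
            linarith
        obtain ⟨e, hemem, hFe⟩ := hIVT2 h00
        have hFee : R (R e) = e := by linarith [sub_eq_zero.mp hFe]
        rcases lt_or_eq_of_le hemem.1 with he0 | he0
        · exact absurd hFee (hnofix e he0 hemem.2)
        · rw [← he0] at hFee
          exact hi 0 ⟨le_refl 0, zero_le_one⟩ hFee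
      -- get contradiction from h0
      obtain ⟨ε₀, hε₀, hh0⟩ := h0
      set ε := min ε₀ c / 2 with hεdef
      have hεpos : 0 < ε := by
        have : 0 < min ε₀ c := lt_min hε₀ hc0
        positivity
      have hεlt : ε < ε₀ := by
        have h1' : min ε₀ c ≤ ε₀ := min_le_left _ _
        have : 0 < min ε₀ c := lt_min hε₀ hc0
        have : ε < min ε₀ c := by rw [hεdef]; linarith
        linarith
      have hεc : ε < c := by
        have h1' : min ε₀ c ≤ c := min_le_right _ _
        have : 0 < min ε₀ c := lt_min hε₀ hc0
        have : ε < min ε₀ c := by rw [hεdef]; linarith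
        linarith
      have hgε : R (R ε) < ε := by
        by_contra hge
        push_neg at hge
        have hsubεc : Set.Icc ε c ⊆ Set.Icc (0:ℝ) 1 := by
          intro x hx
          exact ⟨le_trans (le_of_lt hεpos) hx.1, le_trans hx.2 hc01.2⟩
        have hg : ContinuousOn (fun x => R (R x) - x) (Set.Icc ε c) :=
          (hFcont.mono hsubεc).sub continuousOn_id
        have hIVT3 : Set.Icc (R (R c) - c) (R (R ε) - ε) ⊆
            (fun x => R (R x) - x) '' Set.Icc ε c :=
          intermediate_value_Icc' (le_of_lt hεc) hg
        have h00 : (0:ℝ) ∈ Set.Icc (R (R c) - c) (R (R ε) - ε) := ⟨by linarith, by linarith⟩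
        obtain ⟨e, hemem, hFe⟩ := hIVT3 h00
        have hFee : R (R e) = e := by linarith [sub_eq_zero.mp hFe]
        exact hnofix e (lt_of_lt_of_le hεpos hemem.1) hemem.2 hFee
      exact absurd (hh0 ε hεpos hεlt hR00) (not_lt.mpr (le_of_lt hgε))
    · -- R (R c) = c : then c is F-fixed but R c = z'' ≠ c
      have hRcc : R c = c := hi c hc01 h
      rw [hRc] at hRcc
      have : z'' < z'' := by
        calc z'' = c := hRcc
        _ < zs := hclt
        _ < z'' := hltz''
      exact absurd this (lt_irrefl _)
  · -- (ii) ⇒ (i)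
    intro hni z hz hFz
    by_contra hne
    have hRz : R z ∈ Set.Icc (0:ℝ) 1 := hmap hz
    set z' := min z (R z) with hz'def
    set z'' := max z (R z) with hz''def
    have hz'lt : z' < z'' := min_lt_max.mpr (Ne.symm hne)
    have hkey : R z' = z'' ∧ R z'' = z' := by
      rcases lt_trichotomy z (R z) with h | h | h
      · have h1' : z' = z := min_eq_left (le_of_lt h)
        have h2' : z'' = R z := max_eq_right (le_of_lt h)
        constructor
        · rw [h1', h2']
        · rw [h1', h2', hFz]
      · exact absurd h.symm hne
      · have h1' : z' = R z := min_eq_right (le_of_lt h)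
        have h2' : z'' = z := max_eq_left (le_of_lt h)
        constructor
        · rw [h1', h2', hFz]
        · rw [h1', h2']
    obtain ⟨hk1, hk2⟩ := hkey
    have hz'0 : 0 ≤ z' := le_min hz.1 hRz.1
    have hz''1 : z'' ≤ 1 := max_le hz.2 hRz.2
    have hsub : Set.Icc z' z'' ⊆ Set.Icc (0:ℝ) 1 := by
      intro x hx
      exact ⟨le_trans hz'0 hx.1, le_trans hx.2 hz''1⟩
    have hg : ContinuousOn (fun x => R x - x) (Set.Icc z' z'') :=
      (hcont.mono hsub).sub continuousOn_id
    have hIVT : Set.Icc (R z'' - z'') (R z' - z') ⊆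
        (fun x => R x - x) '' Set.Icc z' z'' :=
      intermediate_value_Icc' (le_of_lt hz'lt) hg
    have h00 : (0:ℝ) ∈ Set.Icc (R z'' - z'') (R z' - z') := by
      rw [hk1, hk2]
      exact ⟨by linarith, by linarith⟩
    obtain ⟨p, hpmem, hp⟩ := hIVT h00
    have hRp : R p = p := by linarith [sub_eq_zero.mp hp]
    have hpne' : p ≠ z' := by
      intro h
      rw [h] at hRp
      rw [hk1] at hRp
      exact absurd hRp.symm (ne_of_lt hz'lt)
    have hpne'' : p ≠ z'' := by
      intro h
      rw [h] at hRp
      rw [hk2] at hRp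
      exact absurd hRp (ne_of_lt hz'lt)
    have hp0 : 0 < p := lt_of_le_of_lt hz'0 (lt_of_le_of_ne hpmem.1 (Ne.symm hpne'))
    have hp1 : p < 1 := lt_of_lt_of_le (lt_of_le_of_ne hpmem.2 hpne'') hz''1
    have hpzs : p = zs := huniq p ⟨hp0, hp1⟩ hRp
    apply hni
    refine ⟨z', z'', hz'0, ?_, ?_, hz''1, le_of_eq hk1.symm, le_of_eq hk2⟩
    · rw [← hpzs]; exact lt_of_le_of_ne hpmem.1 (Ne.symm hpne')
    · rw [← hpzs]; exact lt_of_le_of_ne hpmem.2 hpne''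
end

section
/- For the minority rule with odd m, R'(1/2) = −m! / (2^{m−1} ((m−1)/2)!²); this quantity is strictly decreasing in odd m, and is strictly less than −2 if and only if m ≥ 7. -/
/-!
The minority rule is a lower tail of the binomial distribution, i.e. a partial sum of Bernstein
polynomials. Their derivatives telescope, so `R' = -m · b_{m-1,(m-1)/2}`, which at `z = 1/2` and
`m = 2k + 1` is `-(2k + 1) · C(2k, k) / 4^k`. By the recurrence for central binomial
coefficients, consecutive values of its absolute value have ratio `(2k + 3) / (2k + 2) > 1`;
it first exceeds `2` at `k = 3`, where it is `140 / 64`.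
-/

open Finset Polynomial

theorem bernsteinPolynomial.derivative_sum_range {R : Type*} [CommRing R] (n k : ℕ) :
    derivative (∑ j ∈ range (k + 1), bernsteinPolynomial R n j) =
      -(n * bernsteinPolynomial R (n - 1) k) := by
  induction k with
  | zero => simp [bernsteinPolynomial.derivative_zero]
  | succ k ih =>
    rw [sum_range_succ, derivative_add, ih, bernsteinPolynomial.derivative_succ]
    ring

theorem hasDerivAt_sum_range_binomial (n k : ℕ) (z : ℝ) :
    HasDerivAt (fun z : ℝ => ∑ j ∈ range (k + 1), (n.choose j : ℝ) * z ^ j * (1 - z) ^ (n - j))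
      (-(n * ((n - 1).choose k * z ^ k * (1 - z) ^ (n - 1 - k)))) z := by
  have h := (∑ j ∈ range (k + 1), bernsteinPolynomial ℝ n j).hasDerivAt z
  rw [bernsteinPolynomial.derivative_sum_range] at h
  simpa [bernsteinPolynomial, eval_finsetSum] using h

/-- `R'(1/2)` for the minority rule with `m = 2 * k + 1`. -/
noncomputable def minoritySlope (k : ℕ) : ℝ := -((2 * k + 1) * k.centralBinom / 4 ^ k)

theorem deriv_minority_one_half (k : ℕ) :
    deriv (fun z : ℝ => ∑ j ∈ range (k + 1),
      ((2 * k + 1).choose j : ℝ) * z ^ j * (1 - z) ^ (2 * k + 1 - j)) (1 / 2) = minoritySlope k := by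
  rw [(hasDerivAt_sum_range_binomial (2 * k + 1) k (1 / 2)).deriv, minoritySlope,
    Nat.centralBinom_eq_two_mul_choose]
  simp only [Nat.add_sub_cancel, show 2 * k - k = k by omega]
  rw [mul_assoc _ ((1 / 2 : ℝ) ^ k), ← mul_pow, show (1 / 2 * (1 - 1 / 2) : ℝ) = 1 / 4 by norm_num,
    one_div_pow]
  push_cast
  ring

theorem minoritySlope_eq_factorial (k : ℕ) :
    minoritySlope k = -((2 * k + 1).factorial : ℝ) / (2 ^ (2 * k) * (k.factorial : ℝ) ^ 2) := by
  rw [minoritySlope, Nat.centralBinom_eq_two_mul_choose, Nat.cast_choose ℝ (by omega : k ≤ 2 * k),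
    show 2 * k - k = k by omega, Nat.factorial_succ, pow_mul]
  push_cast
  field_simp
  norm_num

theorem minoritySlope_succ_lt (k : ℕ) : minoritySlope (k + 1) < minoritySlope k := by
  have hc : (0 : ℝ) < k.centralBinom := by exact_mod_cast k.centralBinom_pos
  have hsucc : ((k + 1).centralBinom : ℝ) = 2 * (2 * k + 1) * k.centralBinom / (k + 1) := by
    rw [eq_div_iff (by positivity), mul_comm]
    exact_mod_cast Nat.succ_mul_centralBinom_succ k
  rw [minoritySlope, minoritySlope, neg_lt_neg_iff, hsucc, pow_succ]
  push_cast
  rw [div_lt_div_iff₀ (by positivity) (by positivity)]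
  field_simp
  nlinarith [mul_pos hc (pow_pos four_pos k)]

theorem minoritySlope_strictAnti : StrictAnti minoritySlope :=
  strictAnti_nat_of_succ_lt minoritySlope_succ_lt

theorem minoritySlope_lt_neg_two_iff (k : ℕ) : minoritySlope k < -2 ↔ 3 ≤ k := by
  refine ⟨fun h => ?_, fun h => (minoritySlope_strictAnti.antitone h).trans_lt ?_⟩
  · by_contra! hk
    interval_cases k <;> norm_num [minoritySlope, Nat.centralBinom, Nat.choose] at h
  · norm_num [minoritySlope, Nat.centralBinom, Nat.choose]

/-- Minority rule with odd m: R'(1/2) = −m!/(2^{m−1}((m−1)/2)!²), strictly decreasing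
in odd m, and less than −2 iff m ≥ 7. -/
theorem stmt_5 :
    let R : ℕ → ℝ → ℝ := fun m z =>
      ∑ j ∈ Finset.range ((m - 1) / 2 + 1), (m.choose j : ℝ) * z ^ j * (1 - z) ^ (m - j)
    let r : ℕ → ℝ := fun m =>
      -(m.factorial : ℝ) / (2 ^ (m - 1) * (((m - 1) / 2).factorial : ℝ) ^ 2)
    ∀ m : ℕ, Odd m →
      (deriv (R m) (1/2) = r m ∧
       (∀ m', Odd m' → m < m' → r m' < r m) ∧
       (r m < -2 ↔ 7 ≤ m)) := by
  rintro R r _ ⟨k, rfl⟩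
  have half : ∀ k : ℕ, 2 * k / 2 = k := by omega
  have r_odd : ∀ k, r (2 * k + 1) = minoritySlope k := by
    intro k
    simp only [r, Nat.add_sub_cancel, half, minoritySlope_eq_factorial]
  refine ⟨?_, ?_, ?_⟩
  · simp only [R, Nat.add_sub_cancel, half, r_odd, deriv_minority_one_half]
  · rintro _ ⟨k', rfl⟩ hlt
    rw [r_odd, r_odd]
    exact minoritySlope_strictAnti (by omega)
  · rw [r_odd, minoritySlope_lt_neg_two_iff]
    omega
end

section
/- For θ ∈ (0, 1/5), the values y_1 = 1/4 + ((θ+1)/(4(θ−1)))·√((5θ−1)/(θ−1)) and y_2 = 1/4 − ((θ+1)/(4(θ−1)))·√((5θ−1)/(θ−1)) are real and satisfy 0 ≤ y_1 ≤ 1/2 and 0 ≤ y_2 ≤ 1/2; for θ > 1/5 (with θ < 1) the quantity (5θ−1)/(θ−1) is negative, so these values are not real. -/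
/-- The asymmetric stationary points y₁, y₂ for the two-community majority-wins model
lie in [0, 1/2] exactly when θ ∈ (0, 1/5); for θ ∈ (1/5, 1) the radicand is negative. -/
theorem stmt_13 (θ : ℝ) :
    (θ ∈ Set.Ioo (0:ℝ) (1/5) →
      0 ≤ (5 * θ - 1) / (θ - 1) ∧
      (1/4 + (θ + 1) / (4 * (θ - 1)) * Real.sqrt ((5 * θ - 1) / (θ - 1))
        ∈ Set.Icc (0:ℝ) (1/2)) ∧
      (1/4 - (θ + 1) / (4 * (θ - 1)) * Real.sqrt ((5 * θ - 1) / (θ - 1))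
        ∈ Set.Icc (0:ℝ) (1/2))) ∧
    (θ ∈ Set.Ioo (1/5 : ℝ) 1 → (5 * θ - 1) / (θ - 1) < 0) := by
  constructor
  · rintro ⟨h0, h5⟩
    have hd : θ - 1 < 0 := by linarith
    have hn : 5 * θ - 1 < 0 := by linarith
    have hr : 0 ≤ (5 * θ - 1) / (θ - 1) := div_nonneg_iff.mpr (Or.inr ⟨hn.le, hd.le⟩)
    set s := Real.sqrt ((5 * θ - 1) / (θ - 1)) with hs
    have hs0 : 0 ≤ s := Real.sqrt_nonneg _
    have hs2 : s ^ 2 = (5 * θ - 1) / (θ - 1) := Real.sq_sqrt hr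
    have hs2' : s ^ 2 * (θ - 1) = 5 * θ - 1 := by
      rw [hs2, div_mul_cancel₀ _ hd.ne]
    have hc : (θ + 1) / (4 * (θ - 1)) * s = (θ + 1) * s / (4 * (θ - 1)) := by ring
    have hcs : (θ + 1) / (4 * (θ - 1)) * s ≤ 0 := by
      rw [hc]
      apply div_nonpos_of_nonneg_of_nonpos
      · positivity
      · linarith
    -- key bound: (θ+1) * s ≤ 1 - θ
    have hkey : (θ + 1) * s ≤ 1 - θ := by
      nlinarith [sq_nonneg ((θ + 1) * s - (1 - θ)), sq_nonneg s, sq_nonneg θ,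
        mul_nonneg (mul_nonneg h0.le h0.le) h0.le, sq_nonneg (θ * s)]
    have hcs2 : -(1/4 : ℝ) ≤ (θ + 1) / (4 * (θ - 1)) * s := by
      rw [hc, le_div_iff_of_neg (by linarith : 4 * (θ - 1) < 0)]
      linarith
    refine ⟨hr, ⟨⟨by linarith, by linarith⟩, ⟨by linarith, by linarith⟩⟩⟩
  · rintro ⟨h5, h1⟩
    have hd : θ - 1 < 0 := by linarith
    have hn : 0 < 5 * θ - 1 := by linarith
    exact div_neg_of_pos_of_neg hn hd
end

section
/- Let Ψ be an N×N real matrix with nonnegative off-diagonal entries and zero row sums, such that the associated directed graph (edge i→j iff Ψ_{ij} > 0) has the property that for any two vertices i, j there is a vertex h reachable by directed paths from both i and j. Then there exists a probability vector σ ∈ ℝ^N (σ_i ≥ 0, Σσ_i = 1) with σΨ = 0, and this σ is unique. -/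
/-- A CTMC generator matrix whose directed graph has a common state reachable from any
two states possesses a unique stationary distribution. -/
theorem stmt_15 (N : ℕ) (hN : 0 < N) (Ψ : Matrix (Fin N) (Fin N) ℝ)
    (hoff : ∀ i j, i ≠ j → 0 ≤ Ψ i j)
    (hrow : ∀ i, ∑ j, Ψ i j = 0)
    (hreach : ∀ i j : Fin N, ∃ h : Fin N,
      Relation.ReflTransGen (fun a b => 0 < Ψ a b) i h ∧
      Relation.ReflTransGen (fun a b => 0 < Ψ a b) j h) :
    ∃! σ : Fin N → ℝ,
      (∀ i, 0 ≤ σ i) ∧ (∑ i, σ i = 1) ∧ (∀ j, ∑ i, σ i * Ψ i j = 0) := by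
  classical
  -- diagonal entries are nonpositive
  have hdiag : ∀ i, Ψ i i ≤ 0 := by
    intro i
    have h := hrow i
    have : Ψ i i = -∑ j ∈ Finset.univ.erase i, Ψ i j := by
      have := Finset.add_sum_erase Finset.univ (Ψ i) (Finset.mem_univ i)
      linarith [this.symm ▸ h]
    rw [this]
    simp only [neg_nonpos]
    exact Finset.sum_nonneg fun j hj => hoff i j (Ne.symm (Finset.ne_of_mem_erase hj))
  set c : ℝ := 1 + ∑ i, |Ψ i i| with hc
  have hsumabs : (0:ℝ) ≤ ∑ i, |Ψ i i| := Finset.sum_nonneg fun i _ => abs_nonneg _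
  have hc0 : (0:ℝ) < c := by rw [hc]; linarith
  set P : Matrix (Fin N) (Fin N) ℝ :=
    fun i j => (if i = j then (1:ℝ) else 0) + Ψ i j / c with hP
  have hPnn : ∀ i j, 0 ≤ P i j := by
    intro i j
    by_cases hij : i = j
    · subst hij
      have habs : |Ψ i i| ≤ ∑ k, |Ψ k k| :=
        Finset.single_le_sum (fun k _ => abs_nonneg (Ψ k k)) (Finset.mem_univ i)
      have h1 : -Ψ i i ≤ c := by
        rw [hc]
        have : -Ψ i i = |Ψ i i| := (abs_of_nonpos (hdiag i)).symm
        linarith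
      have h2 : -1 ≤ Ψ i i / c := by
        rw [le_div_iff₀ hc0]
        linarith
      have : P i i = 1 + Ψ i i / c := by simp [hP]
      rw [this]
      linarith
    · simp only [hP, if_neg hij]
      have := hoff i j hij
      positivity
  have hProw : ∀ i, ∑ j, P i j = 1 := by
    intro i
    simp only [hP]
    rw [Finset.sum_add_distrib]
    simp [Finset.sum_ite_eq, ← Finset.sum_div, hrow i]
  have hPoff : ∀ a b, 0 < Ψ a b → 0 < P a b := by
    intro a b hab
    have hne : a ≠ b := by
      intro h; subst h; exact absurd hab (not_lt.2 (hdiag a))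
    simp only [hP, if_neg hne]
    positivity
  -- stationarity for Ψ iff fixed by P
  have hequiv : ∀ σ : Fin N → ℝ, (∀ j, ∑ i, σ i * Ψ i j = 0) →
      (∀ j, ∑ i, σ i * P i j = σ j) := by
    intro σ hσ j
    simp only [hP, mul_add]
    rw [Finset.sum_add_distrib]
    have h1 : ∑ i, σ i * (if i = j then (1:ℝ) else 0) = σ j := by
      rw [Finset.sum_congr rfl (fun i _ => by rw [mul_ite, mul_one, mul_zero])]
      simp
    have h2 : ∑ i, σ i * (Ψ i j / c) = 0 := by
      rw [Finset.sum_congr rfl (fun i _ => by rw [mul_div_assoc'])]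
      rw [← Finset.sum_div, hσ j, zero_div]
    rw [h1, h2, add_zero]
  -- |σ| is also stationary
  have habsstat : ∀ σ : Fin N → ℝ, (∀ j, ∑ i, σ i * P i j = σ j) →
      (∀ j, ∑ i, |σ i| * P i j = |σ j|) := by
    intro σ hσ
    have hge : ∀ j, |σ j| ≤ ∑ i, |σ i| * P i j := by
      intro j
      calc |σ j| = |∑ i, σ i * P i j| := by rw [hσ j]
        _ ≤ ∑ i, |σ i * P i j| := Finset.abs_sum_le_sum_abs _ _
        _ = ∑ i, |σ i| * P i j := by
            refine Finset.sum_congr rfl fun i _ => ?_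
            rw [abs_mul, abs_of_nonneg (hPnn i j)]
    have htot : ∑ j, (∑ i, |σ i| * P i j) = ∑ j, |σ j| := by
      rw [Finset.sum_comm]
      refine Finset.sum_congr rfl fun i _ => ?_
      rw [← Finset.mul_sum, hProw i, mul_one]
    intro j
    by_contra hne
    have hlt : |σ j| < ∑ i, |σ i| * P i j := lt_of_le_of_ne (hge j) (Ne.symm hne)
    have : ∑ j, |σ j| < ∑ j, (∑ i, |σ i| * P i j) :=
      Finset.sum_lt_sum (fun k _ => hge k) ⟨j, Finset.mem_univ j, hlt⟩
    rw [htot] at this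
    exact lt_irrefl _ this
  -- sign propagation along one edge
  have hstep : ∀ σ : Fin N → ℝ, (∀ j, ∑ i, σ i * P i j = σ j) →
      ∀ a b, 0 < Ψ a b → 0 < σ a → 0 < σ b := by
    intro σ hσ a b hab ha
    have hPab : 0 < P a b := hPoff a b hab
    by_contra hb
    push_neg at hb
    have habs := habsstat σ hσ
    have h1 : ∑ i, (-σ i) * P i b = -σ b := by
      rw [← hσ b, ← Finset.sum_neg_distrib]
      exact Finset.sum_congr rfl fun i _ => by ring
    have h2 : |σ b| = -σ b := abs_of_nonpos hb
    have hlt : ∑ i, (-σ i) * P i b < ∑ i, |σ i| * P i b := by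
      refine Finset.sum_lt_sum (fun i _ => ?_) ⟨a, Finset.mem_univ a, ?_⟩
      · exact mul_le_mul_of_nonneg_right (neg_le_abs _) (hPnn i b)
      · have : -σ a < |σ a| := by rw [abs_of_pos ha]; linarith
        exact mul_lt_mul_of_pos_right this hPab
    rw [h1, habs b, h2] at hlt
    exact lt_irrefl _ hlt
  -- sign propagation along reachability
  have hpath : ∀ σ : Fin N → ℝ, (∀ j, ∑ i, σ i * P i j = σ j) →
      ∀ a h, Relation.ReflTransGen (fun x y => 0 < Ψ x y) a h → 0 < σ a → 0 < σ h := by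
    intro σ hσ a h hr ha
    induction hr with
    | refl => exact ha
    | tail _ hbc ih => exact hstep σ hσ _ _ hbc ih
  -- key sign lemma
  have key : ∀ σ : Fin N → ℝ, (∀ j, ∑ i, σ i * Ψ i j = 0) →
      (∀ i, 0 ≤ σ i) ∨ (∀ i, σ i ≤ 0) := by
    intro σ hσ
    by_contra hcon
    push_neg at hcon
    obtain ⟨⟨a, ha'⟩, ⟨b, hb'⟩⟩ := hcon
    obtain ⟨h, hah, hbh⟩ := hreach a b
    have hσP := hequiv σ hσ
    have hpos : 0 < σ h := hpath σ hσP b h hbh hb'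
    have hnegstat : ∀ j, ∑ i, (-σ) i * P i j = (-σ) j := by
      intro j
      simp only [Pi.neg_apply]
      rw [← hσP j, ← Finset.sum_neg_distrib]
      exact Finset.sum_congr rfl fun i _ => by ring
    have hneg : 0 < (-σ) h := by
      refine hpath (-σ) hnegstat a h hah ?_
      simp only [Pi.neg_apply]; linarith
    simp only [Pi.neg_apply] at hneg
    linarith
  -- existence of a nonzero left null vector
  have hdet : Ψ.det = 0 := by
    have h1 : Ψ.mulVec (fun _ => (1:ℝ)) = 0 := by
      funext j
      simp [Matrix.mulVec, dotProduct, hrow j]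
    have : ∃ v ≠ 0, Ψ.mulVec v = 0 := by
      refine ⟨fun _ => 1, ?_, h1⟩
      intro h
      have := congrFun h ⟨0, hN⟩
      simp at this
    exact Matrix.exists_mulVec_eq_zero_iff.1 this
  have hdetT : Ψ.transpose.det = 0 := by rw [Matrix.det_transpose]; exact hdet
  obtain ⟨w, hw0, hw⟩ := Matrix.exists_mulVec_eq_zero_iff.2 hdetT
  have hwstat : ∀ j, ∑ i, w i * Ψ i j = 0 := by
    intro j
    have := congrFun hw j
    simp only [Matrix.mulVec, dotProduct, Matrix.transpose_apply, Pi.zero_apply] at this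
    rw [← this]
    exact Finset.sum_congr rfl fun i _ => mul_comm _ _
  -- produce a nonnegative nonzero null vector v
  have hv : ∃ v : Fin N → ℝ, (∀ i, 0 ≤ v i) ∧ (∃ i, 0 < v i) ∧
      (∀ j, ∑ i, v i * Ψ i j = 0) := by
    have hex : ∃ i, w i ≠ 0 := by
      by_contra hc
      push_neg at hc
      exact hw0 (funext fun i => hc i)
    rcases key w hwstat with hpos | hneg
    · obtain ⟨i, hi⟩ := hex
      exact ⟨w, hpos, ⟨i, lt_of_le_of_ne (hpos i) (Ne.symm hi)⟩, hwstat⟩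
    · obtain ⟨i, hi⟩ := hex
      refine ⟨-w, fun i => by simpa using neg_nonneg.2 (hneg i), ⟨i, ?_⟩, fun j => ?_⟩
      · simp only [Pi.neg_apply]
        have : w i < 0 := lt_of_le_of_ne (hneg i) hi
        linarith
      · simp only [Pi.neg_apply]
        rw [← neg_zero, ← hwstat j, ← Finset.sum_neg_distrib]
        exact Finset.sum_congr rfl fun i _ => by ring
  obtain ⟨v, hvnn, ⟨i0, hi0⟩, hvstat⟩ := hv
  set s : ℝ := ∑ i, v i with hs
  have hs0 : 0 < s := by
    have : v i0 ≤ s := Finset.single_le_sum (fun i _ => hvnn i) (Finset.mem_univ i0)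
    linarith
  refine ⟨fun i => v i / s, ⟨fun i => div_nonneg (hvnn i) hs0.le, ?_, fun j => ?_⟩, ?_⟩
  · rw [← Finset.sum_div, ← hs, div_self hs0.ne']
  · rw [Finset.sum_congr rfl (fun i _ => by rw [div_mul_eq_mul_div]), ← Finset.sum_div,
      hvstat j, zero_div]
  · -- uniqueness
    rintro τ ⟨hτnn, hτsum, hτstat⟩
    funext k
    set σ' : Fin N → ℝ := fun i => v i / s with hσ'
    have hσ'nn : ∀ i, 0 ≤ σ' i := fun i => div_nonneg (hvnn i) hs0.le
    have hσ'sum : ∑ i, σ' i = 1 := by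
      rw [hσ', ← Finset.sum_div, ← hs, div_self hs0.ne']
    have hσ'stat : ∀ j, ∑ i, σ' i * Ψ i j = 0 := by
      intro j
      have heq : ∀ i, σ' i * Ψ i j = v i * Ψ i j / s := fun i => by
        simp only [hσ']; ring
      rw [Finset.sum_congr rfl (fun i _ => heq i), ← Finset.sum_div, hvstat j, zero_div]
    set δ : Fin N → ℝ := fun i => τ i - σ' i with hδ
    have hδstat : ∀ j, ∑ i, δ i * Ψ i j = 0 := by
      intro j
      have : ∑ i, δ i * Ψ i j = (∑ i, τ i * Ψ i j) - ∑ i, σ' i * Ψ i j := by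
        rw [← Finset.sum_sub_distrib]
        exact Finset.sum_congr rfl fun i _ => by rw [hδ]; ring
      rw [this, hτstat j, hσ'stat j, sub_zero]
    have hδsum : ∑ i, δ i = 0 := by
      have : ∑ i, δ i = (∑ i, τ i) - ∑ i, σ' i := by
        rw [← Finset.sum_sub_distrib]
      rw [this, hτsum, hσ'sum, sub_self]
    have hδ0 : ∀ i, δ i = 0 := by
      rcases key δ hδstat with hpos | hneg
      · intro i
        exact (Finset.sum_eq_zero_iff_of_nonneg (fun i _ => hpos i)).1 hδsum i
          (Finset.mem_univ i)
      · intro i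
        have : ∀ i ∈ Finset.univ, (0:ℝ) ≤ -δ i := fun i _ => neg_nonneg.2 (hneg i)
        have hsum' : ∑ i, -δ i = 0 := by
          rw [Finset.sum_neg_distrib, hδsum, neg_zero]
        have := (Finset.sum_eq_zero_iff_of_nonneg this).1 hsum' i (Finset.mem_univ i)
        linarith
    have := hδ0 k
    rw [hδ] at this
    simpa [hσ'] using sub_eq_zero.1 this
end
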